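/- arXiv:1702.01634 — 4 statements merged into one kernel-verified Lean document; each statement's English description precedes it below -/
import Mathlib

section
/- Let ρ and σ be density matrices on M_n(ℂ) with ρ ⊑ σ in the QPE order. Then the kernel of ρ is contained in the kernel of σ: for every v ∈ ℂⁿ, if ρ · v = 0 then σ · v = 0. Consequently the rank of σ is at most the rank of ρ. -/
open Matrix
open scoped ComplexOrder

/-- The largest eigenvalue of a matrix (for a positive semidefinite matrix this
equals the operator norm). -/
noncomputable def maxEig {m : Type*} [Fintype m] (A : Matrix m m ℂ) : ℝ :=
  sSup {a : ℝ | ∃ v : m → ℂ, v ≠ 0 ∧ A.mulVec v = (a : ℂ) • v}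

/-- A density matrix: positive semidefinite with trace 1. -/
def IsDensity {m : Type*} [Fintype m] (ρ : Matrix m m ℂ) : Prop :=
  ρ.PosSemidef ∧ ρ.trace = 1

/-- The quantum positive evidence (QPE) order: ρ ⊑ σ iff σ⁺•ρ - ρ⁺•σ ≥ 0. -/
def QPE {m : Type*} [Fintype m] (ρ σ : Matrix m m ℂ) : Prop :=
  (maxEig σ • ρ - maxEig ρ • σ).PosSemidef

lemma eig_subset_range {n : ℕ} {A : Matrix (Fin n) (Fin n) ℂ} (hA : A.IsHermitian) :
    {a : ℝ | ∃ v : Fin n → ℂ, v ≠ 0 ∧ A.mulVec v = (a : ℂ) • v} ⊆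
      Set.range hA.eigenvalues := by
  rintro a ⟨v, hv, hav⟩
  rw [← Matrix.IsHermitian.spectrum_real_eq_range_eigenvalues hA]
  rw [← spectrum.algebraMap_mem_iff ℂ, ← Matrix.spectrum_toEuclideanLin (A := A)]
  have hx : (WithLp.equiv 2 (Fin n → ℂ)).symm v ≠ 0 := by
    simpa using hv
  refine Module.End.HasEigenvalue.mem_spectrum ?_
  refine Module.End.hasEigenvalue_of_hasEigenvector
    (x := (WithLp.equiv 2 (Fin n → ℂ)).symm v) ⟨?_, hx⟩
  rw [Module.End.mem_eigenspace_iff, WithLp.equiv_symm_apply, Matrix.toEuclideanLin_apply_piLp_toLp, hav]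
  rfl

lemma maxEig_pos {n : ℕ} {ρ : Matrix (Fin n) (Fin n) ℂ} (hρ : IsDensity ρ) :
    0 < maxEig ρ := by
  obtain ⟨hpsd, htr⟩ := hρ
  have hherm := hpsd.isHermitian
  have hne : hherm.eigenvalues ≠ 0 := by
    intro h0
    have hspec := hherm.spectral_theorem
    rw [h0] at hspec
    have hd : Matrix.diagonal (RCLike.ofReal ∘ (0 : Fin n → ℝ)) =
        (0 : Matrix (Fin n) (Fin n) ℂ) := by
      ext j k
      by_cases hjk : j = k <;> simp [Matrix.diagonal_apply, hjk]
    rw [hd, map_zero] at hspec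
    rw [hspec] at htr
    simp at htr
  obtain ⟨i, hi⟩ := Function.ne_iff.mp hne
  have hipos : 0 < hherm.eigenvalues i :=
    (hpsd.eigenvalues_nonneg i).lt_of_ne (by simpa using Ne.symm hi)
  have hmem : hherm.eigenvalues i ∈
      {a : ℝ | ∃ v : Fin n → ℂ, v ≠ 0 ∧ ρ.mulVec v = (a : ℂ) • v} := by
    refine ⟨⇑(hherm.eigenvectorBasis i), ?_, ?_⟩
    · intro h0
      exact hherm.eigenvectorBasis.orthonormal.ne_zero i (by ext j; simpa using congrFun h0 j)
    · rw [hherm.mulVec_eigenvectorBasis, RCLike.real_smul_eq_coe_smul (K := ℂ)]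
      rfl
  have hbdd : BddAbove {a : ℝ | ∃ v : Fin n → ℂ, v ≠ 0 ∧ ρ.mulVec v = (a : ℂ) • v} :=
    (Set.finite_range hherm.eigenvalues).bddAbove.mono (eig_subset_range hherm)
  exact lt_of_lt_of_le hipos (le_csSup hbdd hmem)

theorem stmt2 {n : ℕ} (ρ σ : Matrix (Fin n) (Fin n) ℂ)
    (hρ : IsDensity ρ) (hσ : IsDensity σ) (h : QPE ρ σ) :
    (∀ v : Fin n → ℂ, ρ.mulVec v = 0 → σ.mulVec v = 0) ∧ σ.rank ≤ ρ.rank := by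
  have hρpos := maxEig_pos hρ
  have hker : ∀ v : Fin n → ℂ, ρ.mulVec v = 0 → σ.mulVec v = 0 := by
    intro v hv
    have h1 := h.dotProduct_mulVec_nonneg v
    rw [Matrix.sub_mulVec, Matrix.smul_mulVec, Matrix.smul_mulVec, hv,
      smul_zero, zero_sub, dotProduct_neg, dotProduct_smul] at h1
    have h2 : (0 : ℂ) ≤ star v ⬝ᵥ σ.mulVec v := hσ.1.dotProduct_mulVec_nonneg v
    have h3 : maxEig ρ • (star v ⬝ᵥ σ.mulVec v) = 0 := by
      have h4 : (0 : ℂ) ≤ maxEig ρ • (star v ⬝ᵥ σ.mulVec v) := smul_nonneg hρpos.le h2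
      have h5 : maxEig ρ • (star v ⬝ᵥ σ.mulVec v) ≤ 0 := neg_nonneg.mp h1
      exact le_antisymm h5 h4
    have h6 : star v ⬝ᵥ σ.mulVec v = 0 := by
      rcases smul_eq_zero.mp h3 with h | h
      · exact absurd h hρpos.ne'
      · exact h
    exact (hσ.1.dotProduct_mulVec_zero_iff v).mp h6
  refine ⟨hker, ?_⟩
  have hle : LinearMap.ker ρ.mulVecLin ≤ LinearMap.ker σ.mulVecLin := by
    intro v hv
    rw [LinearMap.mem_ker] at hv ⊢
    exact hker v hv
  have h1 := ρ.mulVecLin.finrank_range_add_finrank_ker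
  have h2 := σ.mulVecLin.finrank_range_add_finrank_ker
  have h3 := Submodule.finrank_mono hle
  rw [show Matrix.rank σ = Module.finrank ℂ (LinearMap.range σ.mulVecLin) from rfl,
    show Matrix.rank ρ = Module.finrank ℂ (LinearMap.range ρ.mulVecLin) from rfl]
  omega
end

section
/- The QPE order is a partial order on the set of density matrices on M_n(ℂ): it is reflexive, transitive, and antisymmetric. -/
open Matrix
open scoped ComplexOrder

section Aux

variable {m : Type*} [Fintype m] [DecidableEq m]

omit [DecidableEq m] in
lemma real_smul_matrix (r : ℝ) (A : Matrix m m ℂ) : r • A = (r : ℂ) • A := by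
  ext i j; simp [Complex.real_smul]

omit [DecidableEq m] in
lemma psd_smul {A : Matrix m m ℂ} (hA : A.PosSemidef) {r : ℝ} (hr : 0 ≤ r) :
    (r • A).PosSemidef := by
  rw [real_smul_matrix]
  refine posSemidef_iff_dotProduct_mulVec.mpr ⟨?_, ?_⟩
  · rw [IsHermitian, conjTranspose_smul, hA.1.eq]
    congr 1
    simp [Complex.ext_iff]
  · intro x
    rw [smul_mulVec, dotProduct_smul]
    exact mul_nonneg (by simp [Complex.le_def, hr]) (hA.dotProduct_mulVec_nonneg x)

lemma psd_neg_eq_zero {A : Matrix m m ℂ} (hA : A.PosSemidef) (hA' : (-A).PosSemidef) :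
    A = 0 := by
  have h : ∀ x : m → ℂ, A *ᵥ x = 0 := by
    intro x
    rw [← hA.dotProduct_mulVec_zero_iff]
    have h1 := hA.dotProduct_mulVec_nonneg x
    have h2 := hA'.dotProduct_mulVec_nonneg x
    rw [neg_mulVec, dotProduct_neg, neg_nonneg] at h2
    exact le_antisymm h2 h1
  ext i j
  have := congrFun (h (Pi.single j 1)) i
  simpa [mulVec_single] using this

lemma mem_eig_set {A : Matrix m m ℂ} (hH : A.IsHermitian) {a : ℝ}
    (ha : ∃ v : m → ℂ, v ≠ 0 ∧ A.mulVec v = (a : ℂ) • v) :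
    a ∈ Set.range hH.eigenvalues := by
  obtain ⟨v, hv, hav⟩ := ha
  set U : Matrix m m ℂ := (hH.eigenvectorUnitary : Matrix m m ℂ) with hU
  set w := (star U) *ᵥ v with hw
  have hUw : U *ᵥ w = v := by
    rw [hw, mulVec_mulVec]
    have : U * star U = 1 := Unitary.mul_star_self_of_mem hH.eigenvectorUnitary.2
    rw [this, one_mulVec]
  have hwne : w ≠ 0 := by
    intro h0
    rw [h0, mulVec_zero] at hUw
    exact hv hUw.symm
  have hdiag : diagonal (RCLike.ofReal ∘ hH.eigenvalues) *ᵥ w = (a : ℂ) • w := by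
    rw [← hH.conjStarAlgAut_star_eigenvectorUnitary, Unitary.conjStarAlgAut_star_apply, ← mulVec_mulVec, hUw, ← mulVec_mulVec, hav,
      mulVec_smul]
  obtain ⟨i, hi⟩ := Function.ne_iff.mp hwne
  have := congrFun hdiag i
  rw [mulVec_diagonal] at this
  simp only [Pi.smul_apply, smul_eq_mul, Function.comp_apply] at this
  have hai : (hH.eigenvalues i : ℂ) = a := mul_right_cancel₀ hi this
  exact ⟨i, by exact_mod_cast hai⟩

lemma maxEig_pos_s3 {A : Matrix m m ℂ} (hA : IsDensity A) : 0 < maxEig A := by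
  obtain ⟨hpsd, htr⟩ := hA
  have hH := hpsd.1
  have hbdd : BddAbove {a : ℝ | ∃ v : m → ℂ, v ≠ 0 ∧ A.mulVec v = (a : ℂ) • v} := by
    apply (Set.finite_range hH.eigenvalues).bddAbove.mono
    intro a ha
    exact mem_eig_set hH ha
  have hsum : ∑ i, (hH.eigenvalues i : ℂ) = 1 := by
    have ht : A.trace = (diagonal (RCLike.ofReal ∘ hH.eigenvalues) : Matrix m m ℂ).trace := by
      conv_lhs => rw [hH.spectral_theorem, Unitary.conjStarAlgAut_apply]
      rw [trace_mul_cycle]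
      have : (star (hH.eigenvectorUnitary : Matrix m m ℂ)) * hH.eigenvectorUnitary = 1 :=
        Unitary.star_mul_self_of_mem hH.eigenvectorUnitary.2
      rw [this, one_mul]
    rw [htr, trace_diagonal] at ht
    simpa using ht.symm
  have hnn : ∀ i, 0 ≤ hH.eigenvalues i := hpsd.eigenvalues_nonneg
  have hex : ∃ i, 0 < hH.eigenvalues i := by
    by_contra h
    push_neg at h
    have : ∀ i, hH.eigenvalues i = 0 := fun i => le_antisymm (h i) (hnn i)
    simp [this] at hsum
  obtain ⟨i, hi⟩ := hex
  have hmem : hH.eigenvalues i ∈ {a : ℝ | ∃ v : m → ℂ, v ≠ 0 ∧ A.mulVec v = (a : ℂ) • v} := by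
    refine ⟨(⇑(hH.eigenvectorBasis i) : m → ℂ), ?_, ?_⟩
    · have := hH.eigenvectorBasis.orthonormal.ne_zero i
      intro h0
      apply this
      ext j
      exact congrFun h0 j
    rw [hH.mulVec_eigenvectorBasis i]
    ext j
    simp [Complex.real_smul]
  exact lt_of_lt_of_le hi (le_csSup hbdd hmem)

end Aux

theorem stmt3 {n : ℕ} :
    (∀ ρ : Matrix (Fin n) (Fin n) ℂ, IsDensity ρ → QPE ρ ρ) ∧
    (∀ ρ σ τ : Matrix (Fin n) (Fin n) ℂ, IsDensity ρ → IsDensity σ → IsDensity τ →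
      QPE ρ σ → QPE σ τ → QPE ρ τ) ∧
    (∀ ρ σ : Matrix (Fin n) (Fin n) ℂ, IsDensity ρ → IsDensity σ →
      QPE ρ σ → QPE σ ρ → ρ = σ) := by
  refine ⟨?_, ?_, ?_⟩
  · intro ρ _
    unfold QPE
    rw [sub_self]
    exact Matrix.PosSemidef.zero
  · intro ρ σ τ hρ hσ hτ h1 h2
    have hρp := maxEig_pos_s3 hρ
    have hσp := maxEig_pos_s3 hσ
    have hτp := maxEig_pos_s3 hτ
    unfold QPE at *
    have key : (maxEig σ • (maxEig τ • ρ - maxEig ρ • τ)).PosSemidef := by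
      have hsum := (psd_smul h1 hτp.le).add (psd_smul h2 hρp.le)
      have : maxEig τ • (maxEig σ • ρ - maxEig ρ • σ) +
          maxEig ρ • (maxEig τ • σ - maxEig σ • τ) =
          maxEig σ • (maxEig τ • ρ - maxEig ρ • τ) := by
        rw [smul_sub, smul_sub, smul_sub, smul_smul, smul_smul, smul_smul, smul_smul,
          smul_smul, smul_smul]
        ring_nf
        abel
      rwa [this] at hsum
    have := psd_smul key (le_of_lt (inv_pos.mpr hσp))
    rwa [smul_smul, inv_mul_cancel₀ hσp.ne', one_smul] at this
  · intro ρ σ hρ hσ h1 h2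
    have hρp := maxEig_pos_s3 hρ
    have hσp := maxEig_pos_s3 hσ
    unfold QPE at h1 h2
    have hneg : -(maxEig σ • ρ - maxEig ρ • σ) = maxEig ρ • σ - maxEig σ • ρ := by abel
    have hz : maxEig σ • ρ - maxEig ρ • σ = 0 := by
      apply psd_neg_eq_zero h1
      rw [hneg]
      exact h2
    have heq : maxEig σ • ρ = maxEig ρ • σ := sub_eq_zero.mp hz
    -- take traces
    have htrace : (maxEig σ : ℂ) = (maxEig ρ : ℂ) := by
      have := congrArg Matrix.trace heq
      rw [real_smul_matrix, real_smul_matrix, trace_smul, trace_smul, hρ.2, hσ.2] at this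
      simpa using this
    have hme : maxEig σ = maxEig ρ := by exact_mod_cast htrace
    rw [hme] at heq
    exact smul_right_injective _ hρp.ne' heq
end

section
/- Down-sets in the QPE order are convex: if ρ₁, ρ₂, σ are density matrices on M_n(ℂ) with ρ₁ ⊑ σ and ρ₂ ⊑ σ, then for every t ∈ [0,1], (1−t)•ρ₁ + t•ρ₂ ⊑ σ. -/
/-! For Hermitian `A`, `maxEig A` is the top of the real spectrum, so `maxEig A ≤ r` iff
`A ≤ r • 1` in the Loewner order. This makes `maxEig` convex on Hermitian matrices, and then
for `ρ = (1 - t) • ρ₁ + t • ρ₂`, with `σ ≥ 0`,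
`ρ⁺ • σ ≤ ((1 - t) ρ₁⁺ + t ρ₂⁺) • σ ≤ (1 - t) • σ⁺ • ρ₁ + t • σ⁺ • ρ₂ = σ⁺ • ρ`. -/

open Matrix
open scoped ComplexOrder

open scoped MatrixOrder

variable {m : Type*} [Fintype m]

theorem qpe_iff_le {ρ σ : Matrix m m ℂ} : QPE ρ σ ↔ maxEig ρ • σ ≤ maxEig σ • ρ := Iff.rfl

variable [DecidableEq m]

theorem Matrix.setOf_mulVec_eq_smul_eq_spectrum (A : Matrix m m ℂ) :
    {a : ℝ | ∃ v : m → ℂ, v ≠ 0 ∧ A *ᵥ v = (a : ℂ) • v} = spectrum ℝ A := by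
  ext a
  rw [Set.mem_ofPred_eq, ← spectrum.algebraMap_mem_iff ℂ, ← spectrum_toLin',
    ← Module.End.hasEigenvalue_iff_mem_spectrum]
  simp only [Module.End.hasEigenvalue_iff, Submodule.ne_bot_iff, Module.End.mem_eigenspace_iff,
    toLin'_apply, Complex.coe_algebraMap]
  tauto

theorem maxEig_eq_sSup_spectrum (A : Matrix m m ℂ) : maxEig A = sSup (spectrum ℝ A) :=
  congrArg sSup A.setOf_mulVec_eq_smul_eq_spectrum

theorem maxEig_le_iff [Nonempty m] {A : Matrix m m ℂ} (hA : A.IsHermitian) {r : ℝ} :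
    maxEig A ≤ r ↔ A ≤ algebraMap ℝ _ r := by
  rw [maxEig_eq_sSup_spectrum, le_algebraMap_iff_spectrum_le hA.isSelfAdjoint,
    csSup_le_iff (hA.spectrum_real_eq_range_eigenvalues ▸ (Set.finite_range _).bddAbove)
      (ContinuousFunctionalCalculus.spectrum_nonempty A hA.isSelfAdjoint)]

theorem le_algebraMap_maxEig [Nonempty m] {A : Matrix m m ℂ} (hA : A.IsHermitian) :
    A ≤ algebraMap ℝ _ (maxEig A) :=
  (maxEig_le_iff hA).1 le_rfl

theorem maxEig_smul_add_smul_le [Nonempty m] {A B : Matrix m m ℂ} (hA : A.IsHermitian)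
    (hB : B.IsHermitian) {s t : ℝ} (hs : 0 ≤ s) (ht : 0 ≤ t) :
    maxEig (s • A + t • B) ≤ s * maxEig A + t * maxEig B := by
  rw [maxEig_le_iff ((hA.smul (.all s)).add (hB.smul (.all t))), map_add, map_mul, map_mul,
    ← Algebra.smul_def, ← Algebra.smul_def]
  gcongr
  · exact le_algebraMap_maxEig hA
  · exact le_algebraMap_maxEig hB

theorem QPE.smul_add_smul {ρ₁ ρ₂ σ : Matrix m m ℂ} (h₁ : ρ₁.IsHermitian) (h₂ : ρ₂.IsHermitian)
    (hσ : σ.PosSemidef) (hρ₁ : QPE ρ₁ σ) (hρ₂ : QPE ρ₂ σ) {s t : ℝ} (hs : 0 ≤ s) (ht : 0 ≤ t) :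
    QPE (s • ρ₁ + t • ρ₂) σ := by
  rw [qpe_iff_le] at *
  cases isEmpty_or_nonempty m
  · exact (Subsingleton.elim _ _).le
  calc maxEig (s • ρ₁ + t • ρ₂) • σ ≤ (s * maxEig ρ₁ + t * maxEig ρ₂) • σ :=
        smul_le_smul_of_nonneg_right (maxEig_smul_add_smul_le h₁ h₂ hs ht) hσ.nonneg
    _ = s • (maxEig ρ₁ • σ) + t • (maxEig ρ₂ • σ) := by rw [add_smul, mul_smul, mul_smul]
    _ ≤ s • (maxEig σ • ρ₁) + t • (maxEig σ • ρ₂) := by gcongr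
    _ = maxEig σ • (s • ρ₁ + t • ρ₂) := by rw [smul_add, smul_comm s, smul_comm t]

theorem stmt9 {n : ℕ} (ρ₁ ρ₂ σ : Matrix (Fin n) (Fin n) ℂ)
    (h₁ : IsDensity ρ₁) (h₂ : IsDensity ρ₂) (hσ : IsDensity σ)
    (hρ₁ : QPE ρ₁ σ) (hρ₂ : QPE ρ₂ σ) (t : ℝ) (ht : t ∈ Set.Icc (0 : ℝ) 1) :
    QPE ((1 - t) • ρ₁ + t • ρ₂) σ :=
  hρ₁.smul_add_smul h₁.1.1 h₂.1.1 hσ.1 hρ₂ (sub_nonneg.2 ht.2) ht.1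
end

section
/- The QPE order is directed complete on increasing sequences: if (σᵢ) is a sequence of density matrices on M_n(ℂ) with σᵢ ⊑ σᵢ₊₁ for all i, then (σᵢ) converges in operator norm to a density matrix σ which is the supremum of the sequence: σᵢ ⊑ σ for all i, and for every density matrix τ with σᵢ ⊑ τ for all i one has σ ⊑ τ. -/
open Matrix
open scoped ComplexOrder

namespace QPEAux

variable {n : ℕ}

lemma star_dot_self_eq (v : Fin n → ℂ) :
    star v ⬝ᵥ v = ((∑ i, Complex.normSq (v i) : ℝ) : ℂ) := by
  rw [Complex.ofReal_sum]
  refine Finset.sum_congr rfl fun i _ => ?_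
  simp [Complex.normSq_eq_conj_mul_self]

lemma star_dot_self_pos {v : Fin n → ℂ} (hv : v ≠ 0) :
    (0:ℝ) < ∑ i, Complex.normSq (v i) := by
  have h0 : star v ⬝ᵥ v ≠ 0 := fun h => hv (dotProduct_star_self_eq_zero.mp h)
  rw [star_dot_self_eq] at h0
  have h1 : (0:ℝ) ≤ ∑ i, Complex.normSq (v i) :=
    Finset.sum_nonneg fun i _ => Complex.normSq_nonneg _
  rcases h1.lt_or_eq with h | h
  · exact h
  · exact absurd (by rw [← h]; norm_num) h0

lemma eig_le_of_shift (A : Matrix (Fin n) (Fin n) ℂ) {c a : ℝ} {v : Fin n → ℂ}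
    (hv : v ≠ 0) (hAv : A *ᵥ v = (a : ℂ) • v)
    (hPSD : (c • (1 : Matrix (Fin n) (Fin n) ℂ) - A).PosSemidef) : a ≤ c := by
  have h := hPSD.dotProduct_mulVec_nonneg v
  rw [sub_mulVec, smul_mulVec, one_mulVec, hAv] at h
  have : star v ⬝ᵥ (c • v - (a:ℂ) • v) = ((c - a : ℝ) : ℂ) * (star v ⬝ᵥ v) := by
    rw [dotProduct_sub, dotProduct_smul, dotProduct_smul, Complex.real_smul, smul_eq_mul]
    push_cast
    ring
  rw [this, star_dot_self_eq, ← Complex.ofReal_mul] at h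
  rw [Complex.zero_le_real] at h
  have hs := star_dot_self_pos hv
  nlinarith

lemma maxEig_eq (A : Matrix (Fin n) (Fin n) ℂ) (c : ℝ)
    (hex : ∃ v : Fin n → ℂ, v ≠ 0 ∧ A *ᵥ v = (c:ℂ) • v)
    (hPSD : (c • (1 : Matrix (Fin n) (Fin n) ℂ) - A).PosSemidef) :
    maxEig A = c := by
  refine IsGreatest.csSup_eq ⟨hex, ?_⟩
  rintro a ⟨v, hv, hAv⟩
  exact eig_le_of_shift A hv hAv hPSD


lemma smul_one_sub_posSemidef {A : Matrix (Fin n) (Fin n) ℂ} (hA : A.IsHermitian)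
    {c : ℝ} (hc : ∀ i, hA.eigenvalues i ≤ c) :
    (c • (1 : Matrix (Fin n) (Fin n) ℂ) - A).PosSemidef := by
  have key : c • (1 : Matrix (Fin n) (Fin n) ℂ) - A
      = (hA.eigenvectorUnitary : Matrix (Fin n) (Fin n) ℂ) *
        Matrix.diagonal (fun i => ((c - hA.eigenvalues i : ℝ) : ℂ)) *
        star (hA.eigenvectorUnitary : Matrix (Fin n) (Fin n) ℂ) := by
    conv_lhs => rw [hA.spectral_theorem, Unitary.conjStarAlgAut_apply]
    have h1 : c • (1 : Matrix (Fin n) (Fin n) ℂ)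
        = (hA.eigenvectorUnitary : Matrix (Fin n) (Fin n) ℂ) * (c • 1) *
          star (hA.eigenvectorUnitary : Matrix (Fin n) (Fin n) ℂ) := by
      rw [Matrix.mul_smul, Matrix.smul_mul, mul_one,
        (Matrix.mem_unitaryGroup_iff).mp hA.eigenvectorUnitary.2]
    rw [h1, ← Matrix.sub_mul, ← Matrix.mul_sub]
    congr 1
    congr 1
    ext i j
    by_cases h : i = j <;>
      simp [h, Matrix.one_apply, Matrix.diagonal_apply, Complex.real_smul] <;> push_cast <;> ring
  rw [key, Matrix.star_eq_conjTranspose]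
  exact (Matrix.posSemidef_diagonal_iff.mpr fun i =>
    Complex.zero_le_real.mpr (by linarith [hc i])).mul_mul_conjTranspose_same _

lemma maxEig_herm {A : Matrix (Fin n) (Fin n) ℂ} (hA : A.IsHermitian) (hn : 0 < n) :
    ∃ i₀ : Fin n, maxEig A = hA.eigenvalues i₀ ∧ (∀ i, hA.eigenvalues i ≤ maxEig A) ∧
      (∃ v : Fin n → ℂ, v ≠ 0 ∧ A *ᵥ v = ((maxEig A : ℝ) : ℂ) • v) ∧
      ((maxEig A) • (1 : Matrix (Fin n) (Fin n) ℂ) - A).PosSemidef := by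
  haveI : Nonempty (Fin n) := ⟨⟨0, hn⟩⟩
  obtain ⟨i₀, -, hi₀⟩ := Finset.exists_mem_eq_sup' Finset.univ_nonempty hA.eigenvalues
  set c := hA.eigenvalues i₀ with hcdef
  have hub : ∀ i, hA.eigenvalues i ≤ c := fun i => hi₀ ▸ Finset.le_sup' _ (Finset.mem_univ i)
  have hvec : ∃ v : Fin n → ℂ, v ≠ 0 ∧ A *ᵥ v = ((c : ℝ) : ℂ) • v := by
    refine ⟨⇑(hA.eigenvectorBasis i₀), ?_, ?_⟩
    · intro h
      exact hA.eigenvectorBasis.orthonormal.ne_zero i₀ (by ext k; exact congrFun h k)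
    · rw [hA.mulVec_eigenvectorBasis]
      funext k
      simp [Complex.real_smul, hcdef]
  have hPSD := smul_one_sub_posSemidef hA hub
  have hme : maxEig A = c := maxEig_eq A c hvec hPSD
  exact ⟨i₀, hme, by rw [hme]; exact hub, by rw [hme]; exact hvec,
    by rw [hme]; exact hPSD⟩

lemma trace_eq_sum_eigenvalues {A : Matrix (Fin n) (Fin n) ℂ} (hA : A.IsHermitian) :
    A.trace = ((∑ i, hA.eigenvalues i : ℝ) : ℂ) := by
  conv_lhs => rw [hA.spectral_theorem, Unitary.conjStarAlgAut_apply]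
  rw [Matrix.trace_mul_cycle, (Matrix.mem_unitaryGroup_iff').mp hA.eigenvectorUnitary.2,
    one_mul, Matrix.trace_diagonal]
  push_cast
  rfl


lemma posSemidef_smul {A : Matrix (Fin n) (Fin n) ℂ} (hA : A.PosSemidef) {c : ℝ} (hc : 0 ≤ c) :
    (c • A).PosSemidef := by
  refine Matrix.PosSemidef.of_dotProduct_mulVec_nonneg ?_ fun x => ?_
  · show (c • A)ᴴ = c • A
    rw [Matrix.conjTranspose_smul, star_trivial, hA.1.eq]
  · rw [Matrix.smul_mulVec, dotProduct_smul]
    have := hA.dotProduct_mulVec_nonneg x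
    rw [Complex.real_smul]
    exact mul_nonneg (Complex.zero_le_real.mpr hc) this

lemma diag_nonneg {A : Matrix (Fin n) (Fin n) ℂ} (hA : A.PosSemidef) (i : Fin n) :
    0 ≤ A i i := by
  have h := hA.dotProduct_mulVec_nonneg (Pi.single i 1)
  have he : star (Pi.single i (1:ℂ)) ⬝ᵥ (A *ᵥ Pi.single i 1) = A i i := by
    rw [← Pi.single_star, star_one, Matrix.mulVec_single, single_dotProduct]
    simp
  rwa [he] at h

lemma trace_re_nonneg {A : Matrix (Fin n) (Fin n) ℂ} (hA : A.PosSemidef) :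
    0 ≤ A.trace.re := by
  rw [Matrix.trace, Complex.re_sum]
  exact Finset.sum_nonneg fun i _ => (Complex.nonneg_iff.mp (diag_nonneg hA i)).1

lemma diag_re_le_trace_re {A : Matrix (Fin n) (Fin n) ℂ} (hA : A.PosSemidef) (a : Fin n) :
    (A a a).re ≤ A.trace.re := by
  rw [Matrix.trace, Complex.re_sum]
  exact Finset.single_le_sum (fun i _ => (Complex.nonneg_iff.mp (diag_nonneg hA i)).1)
    (Finset.mem_univ a)

lemma abs_entry_le_trace {A : Matrix (Fin n) (Fin n) ℂ} (hA : A.PosSemidef) (a b : Fin n) :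
    ‖A a b‖ ≤ A.trace.re := by
  by_cases hab0 : A a b = 0
  · simpa [hab0] using trace_re_nonneg hA
  by_cases hab : a = b
  · subst hab
    have h0 := diag_nonneg hA a
    have : ‖A a a‖ = (A a a).re := (Complex.re_eq_norm.mpr h0).symm
    rw [this]
    exact diag_re_le_trace_re hA a
  · set z : ℂ := (starRingEnd ℂ) (A a b) / ((‖A a b‖ : ℝ) : ℂ) with hz
    have habs : ((‖A a b‖ : ℝ) : ℂ) ≠ 0 := by
      simpa using hab0
    have hzz : z * A a b = ((‖A a b‖ : ℝ) : ℂ) := by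
      rw [hz, div_mul_eq_mul_div, mul_comm, Complex.mul_conj, Complex.normSq_eq_norm_sq]
      push_cast
      field_simp
    have hsz : star z * A b a = ((‖A a b‖ : ℝ) : ℂ) := by
      have hba : A b a = star (A a b) := (hA.1.apply b a).symm
      rw [hz, hba]
      simp only [star_div₀, RCLike.star_def, Complex.conj_conj, Complex.conj_ofReal]
      rw [div_mul_eq_mul_div, Complex.mul_conj, Complex.normSq_eq_norm_sq]
      push_cast
      field_simp
    have hz1 : star z * z = 1 := by
      have hns : Complex.normSq z = 1 := by
        rw [hz, Complex.normSq_div, Complex.normSq_conj, Complex.normSq_ofReal,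
          Complex.normSq_eq_norm_sq]
        have habsR : ‖A a b‖ ≠ 0 := by simpa using hab0
        field_simp
      rw [RCLike.star_def, mul_comm, Complex.mul_conj, hns]
      norm_num
    set v : Fin n → ℂ := Pi.single a 1 + Pi.single b (-z) with hvdef
    have hsv : star v = Pi.single a 1 + Pi.single b (-(star z)) := by
      rw [hvdef, star_add, ← Pi.single_star, ← Pi.single_star, star_one, star_neg]
    have hQ : star v ⬝ᵥ (A *ᵥ v) =
        A a a + A b b - 2 * ((‖A a b‖ : ℝ) : ℂ) := by
      rw [hsv, hvdef]
      rw [Matrix.mulVec_add, Matrix.mulVec_single, Matrix.mulVec_single]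
      rw [add_dotProduct, single_dotProduct, single_dotProduct]
      simp only [Pi.add_apply]
      have e1 : z * A a b = ((‖A a b‖ : ℝ) : ℂ) := hzz
      have e2 : star z * A b a = ((‖A a b‖ : ℝ) : ℂ) := hsz
      have e3 : star z * z = 1 := hz1
      calc 1 * (A a a * 1 + A a b * -z) + -star z * (A b a * 1 + A b b * -z)
          = A a a - z * A a b - star z * A b a + (star z * z) * A b b := by ring
        _ = A a a + A b b - 2 * ((‖A a b‖ : ℝ) : ℂ) := by rw [e1, e2, e3]; ring
    have hpos := hA.dotProduct_mulVec_nonneg v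
    rw [hQ] at hpos
    have hre := (Complex.nonneg_iff.mp hpos).1
    simp only [Complex.sub_re, Complex.add_re, Complex.mul_re, Complex.ofReal_re,
      Complex.ofReal_im, Complex.re_ofNat, Complex.im_ofNat] at hre
    have h1 := diag_re_le_trace_re hA a
    have h2 := diag_re_le_trace_re hA b
    nlinarith [norm_nonneg (A a b)]

lemma density_maxEig_pos_le_one {A : Matrix (Fin n) (Fin n) ℂ} (hP : A.PosSemidef)
    (htr : A.trace = 1) (hn : 0 < n) : 0 < maxEig A ∧ maxEig A ≤ 1 := by
  obtain ⟨i₀, hme, hub, -, -⟩ := maxEig_herm hP.1 hn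
  have hsum : ∑ i, hP.1.eigenvalues i = 1 := by
    have h := trace_eq_sum_eigenvalues hP.1
    rw [htr] at h
    exact_mod_cast h.symm
  have hnn : ∀ i, 0 ≤ hP.1.eigenvalues i := hP.eigenvalues_nonneg
  constructor
  · by_contra h
    push_neg at h
    have hz : ∀ i ∈ Finset.univ, hP.1.eigenvalues i = 0 := fun i _ =>
      le_antisymm (le_trans (hub i) h) (hnn i)
    rw [Finset.sum_congr rfl hz] at hsum
    simp at hsum
  · rw [hme]
    calc hP.1.eigenvalues i₀ ≤ ∑ i, hP.1.eigenvalues i :=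
          Finset.single_le_sum (fun i _ => hnn i) (Finset.mem_univ i₀)
    _ = 1 := hsum

lemma quadform_tendsto {P : ℕ → Matrix (Fin n) (Fin n) ℂ} {Q : Matrix (Fin n) (Fin n) ℂ}
    (hT : Filter.Tendsto P Filter.atTop (nhds Q)) (x : Fin n → ℂ) :
    Filter.Tendsto (fun i => star x ⬝ᵥ (P i) *ᵥ x) Filter.atTop
      (nhds (star x ⬝ᵥ Q *ᵥ x)) := by
  have hc : Continuous fun M : Matrix (Fin n) (Fin n) ℂ => star x ⬝ᵥ M *ᵥ x :=
    Continuous.dotProduct continuous_const (continuous_id.matrix_mulVec continuous_const)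
  exact (hc.tendsto Q).comp hT

lemma entry_tendsto {P : ℕ → Matrix (Fin n) (Fin n) ℂ} {Q : Matrix (Fin n) (Fin n) ℂ}
    (hT : Filter.Tendsto P Filter.atTop (nhds Q)) (a b : Fin n) :
    Filter.Tendsto (fun i => P i a b) Filter.atTop (nhds (Q a b)) :=
  ((continuous_id.matrix_elem a b).tendsto Q).comp hT

lemma posSemidef_of_tendsto {P : ℕ → Matrix (Fin n) (Fin n) ℂ} {Q : Matrix (Fin n) (Fin n) ℂ}
    (hT : Filter.Tendsto P Filter.atTop (nhds Q))
    (hP : ∀ᶠ i in Filter.atTop, (P i).PosSemidef) : Q.PosSemidef := by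
  refine Matrix.PosSemidef.of_dotProduct_mulVec_nonneg ?_ ?_
  · have : ∀ a b, star (Q b a) = Q a b := by
      intro a b
      have h1 : Filter.Tendsto (fun i => star (P i b a)) Filter.atTop (nhds (star (Q b a))) :=
        (continuous_star.tendsto _).comp (entry_tendsto hT b a)
      have h2 : Filter.Tendsto (fun i => star (P i b a)) Filter.atTop (nhds (Q a b)) := by
        refine (entry_tendsto hT a b).congr' ?_
        filter_upwards [hP] with i hi
        exact (hi.1.apply a b).symm
      exact tendsto_nhds_unique h1 h2
    exact Matrix.IsHermitian.ext fun a b => this a b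
  · intro x
    have hq := quadform_tendsto hT x
    rw [Complex.nonneg_iff]
    constructor
    · have hre : Filter.Tendsto (fun i => (star x ⬝ᵥ (P i) *ᵥ x).re) Filter.atTop
          (nhds ((star x ⬝ᵥ Q *ᵥ x).re)) := (Complex.continuous_re.tendsto _).comp hq
      refine ge_of_tendsto hre ?_
      filter_upwards [hP] with i hi
      exact (Complex.nonneg_iff.mp (hi.dotProduct_mulVec_nonneg x)).1
    · have him : Filter.Tendsto (fun i => (star x ⬝ᵥ (P i) *ᵥ x).im) Filter.atTop
          (nhds ((star x ⬝ᵥ Q *ᵥ x).im)) := (Complex.continuous_im.tendsto _).comp hq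
      have him0 : Filter.Tendsto (fun i => (star x ⬝ᵥ (P i) *ᵥ x).im) Filter.atTop (nhds 0) := by
        refine Filter.Tendsto.congr' ?_ tendsto_const_nhds
        filter_upwards [hP] with i hi
        exact (Complex.nonneg_iff.mp (hi.dotProduct_mulVec_nonneg x)).2
      exact tendsto_nhds_unique him0 him

lemma inv_mul_aux1 {a b : ℝ} (hb : b ≠ 0) : (a*b)⁻¹ * b = a⁻¹ := by
  rw [mul_inv, mul_assoc, inv_mul_cancel₀ hb, mul_one]

lemma inv_mul_aux2 {a b : ℝ} (ha : a ≠ 0) : (a*b)⁻¹ * a = b⁻¹ := by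
  rw [mul_inv, mul_right_comm, inv_mul_cancel₀ ha, one_mul]

lemma real_smul_vec (r : ℝ) (w : Fin n → ℂ) : r • w = ((r:ℂ)) • w :=
  funext fun k => by simp [Complex.real_smul]

end QPEAux

theorem stmt12 {n : ℕ} (σ : ℕ → Matrix (Fin n) (Fin n) ℂ)
    (hd : ∀ i, IsDensity (σ i)) (hmono : ∀ i, QPE (σ i) (σ (i + 1))) :
    ∃ σ' : Matrix (Fin n) (Fin n) ℂ, IsDensity σ' ∧
      Filter.Tendsto σ Filter.atTop (nhds σ') ∧
      (∀ i, QPE (σ i) σ') ∧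
      ∀ τ, IsDensity τ → (∀ i, QPE (σ i) τ) → QPE σ' τ := by
  rcases Nat.eq_zero_or_pos n with hn | hn
  · subst hn
    exact absurd (hd 0).2 (by simp [Matrix.trace])
  have hpos : ∀ i, (σ i).PosSemidef := fun i => (hd i).1
  have htr : ∀ i, (σ i).trace = 1 := fun i => (hd i).2
  set μ : ℕ → ℝ := fun i => maxEig (σ i) with hμdef
  have hμ : ∀ i, 0 < μ i ∧ μ i ≤ 1 := fun i =>
    QPEAux.density_maxEig_pos_le_one (hpos i) (htr i) hn
  set ρ : ℕ → Matrix (Fin n) (Fin n) ℂ := fun i => (μ i)⁻¹ • σ i with hρdef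
  have hρpos : ∀ i, (ρ i).PosSemidef := fun i =>
    QPEAux.posSemidef_smul (hpos i) (inv_nonneg.mpr (hμ i).1.le)
  have hσρ : ∀ i, μ i • ρ i = σ i := by
    intro i
    rw [hρdef]
    rw [smul_smul, mul_inv_cancel₀ (hμ i).1.ne', one_smul]
  -- step positivity
  have hm : ∀ i, (μ (i+1) • σ i - μ i • σ (i+1)).PosSemidef := fun i => hmono i
  have hstep : ∀ i, (ρ i - ρ (i+1)).PosSemidef := by
    intro i
    have hcpos : (0:ℝ) ≤ (μ i * μ (i+1))⁻¹ :=
      inv_nonneg.mpr (mul_nonneg (hμ i).1.le (hμ (i+1)).1.le)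
    have h := QPEAux.posSemidef_smul (hm i) hcpos
    have hc1 : (μ i * μ (i+1))⁻¹ * μ (i+1) = (μ i)⁻¹ :=
      QPEAux.inv_mul_aux1 (hμ (i+1)).1.ne'
    have hc2 : (μ i * μ (i+1))⁻¹ * μ i = (μ (i+1))⁻¹ :=
      QPEAux.inv_mul_aux2 (hμ i).1.ne'
    have he : (μ i * μ (i+1))⁻¹ • (μ (i+1) • σ i - μ i • σ (i+1)) = ρ i - ρ (i+1) := by
      rw [smul_sub, smul_smul, smul_smul, hc1, hc2]
    rwa [he] at h
  have hchain : ∀ i j, i ≤ j → (ρ i - ρ j).PosSemidef := by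
    intro i j hij
    induction j, hij using Nat.le_induction with
    | base => rw [sub_self]; exact Matrix.PosSemidef.zero
    | succ j hij ih =>
      have := ih.add (hstep j)
      rwa [sub_add_sub_cancel] at this
  -- traces
  set t : ℕ → ℝ := fun i => (μ i)⁻¹ with htdef
  have htρ : ∀ i, (ρ i).trace = ((t i : ℝ) : ℂ) := by
    intro i
    rw [hρdef]
    rw [Matrix.trace_smul, htr, htdef, Complex.real_smul, mul_one]
  have ht1 : ∀ i, 1 ≤ t i := by
    intro i
    have h1 := (hμ i).1
    have h2 := (hμ i).2
    have h3 : 0 < (μ i)⁻¹ := inv_pos.mpr h1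
    have h4 : μ i * (μ i)⁻¹ = 1 := mul_inv_cancel₀ h1.ne'
    show 1 ≤ (μ i)⁻¹
    nlinarith
  have ht_anti : Antitone t := by
    refine antitone_nat_of_succ_le fun i => ?_
    have h := QPEAux.trace_re_nonneg (hstep i)
    rw [Matrix.trace_sub, htρ, htρ] at h
    simpa using h
  have hbdd : BddBelow (Set.range t) := ⟨1, by rintro x ⟨i, rfl⟩; exact ht1 i⟩
  set tInf : ℝ := ⨅ i, t i with htInfdef
  have ht_tend : Filter.Tendsto t Filter.atTop (nhds tInf) :=
    tendsto_atTop_ciInf ht_anti hbdd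
  have htInf1 : 1 ≤ tInf := le_ciInf ht1
  have htInfpos : 0 < tInf := lt_of_lt_of_le one_pos htInf1
  -- entrywise limits
  have hconv : ∀ a b : Fin n, ∃ L : ℂ,
      Filter.Tendsto (fun i => ρ i a b) Filter.atTop (nhds L) := by
    intro a b
    have key : ∀ N i j, N ≤ i → i ≤ j → dist (ρ i a b) (ρ j a b) ≤ t N - tInf := by
      intro N i j hNi hij
      rw [Complex.dist_eq]
      have h1 : ρ i a b - ρ j a b = (ρ i - ρ j) a b := by simp [Matrix.sub_apply]
      rw [h1]
      have h2 := QPEAux.abs_entry_le_trace (hchain i j hij) a b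
      have h3 : ((ρ i - ρ j).trace).re = t i - t j := by
        rw [Matrix.trace_sub, htρ, htρ]
        simp
      rw [h3] at h2
      have h4 : t i ≤ t N := ht_anti hNi
      have h5 : tInf ≤ t j := ciInf_le hbdd j
      linarith
    have hcauchy : CauchySeq (fun i => ρ i a b) := by
      refine cauchySeq_of_le_tendsto_0 (fun N => t N - tInf) (fun i j N hNi hNj => ?_) ?_
      · rcases le_total i j with h | h
        · exact key N i j hNi h
        · rw [dist_comm]
          exact key N j i hNj h
      · have := ht_tend.sub_const tInf
        simpa using this
    exact cauchySeq_tendsto_of_complete hcauchy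
  choose L hL using hconv
  set rhoInf : Matrix (Fin n) (Fin n) ℂ := Matrix.of L with hrhoInfdef
  have hTρ : Filter.Tendsto ρ Filter.atTop (nhds rhoInf) := by
    apply tendsto_pi_nhds.mpr
    intro a
    apply tendsto_pi_nhds.mpr
    intro b
    exact hL a b
  have hrhoInfPSD : rhoInf.PosSemidef :=
    QPEAux.posSemidef_of_tendsto hTρ (Filter.Eventually.of_forall hρpos)
  have hrhoInfle : ∀ i, (ρ i - rhoInf).PosSemidef := by
    intro i
    refine QPEAux.posSemidef_of_tendsto (tendsto_const_nhds.sub hTρ) ?_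
    exact Filter.eventually_atTop.mpr ⟨i, fun j hj => hchain i j hj⟩
  -- 1 - ρ i is PSD
  have hIρ : ∀ i, ((1:Matrix (Fin n) (Fin n) ℂ) - ρ i).PosSemidef := by
    intro i
    obtain ⟨-, -, -, -, hPSD⟩ := QPEAux.maxEig_herm (hpos i).1 hn
    have h := QPEAux.posSemidef_smul hPSD (inv_nonneg.mpr (hμ i).1.le)
    have he : (μ i)⁻¹ • (μ i • (1:Matrix (Fin n) (Fin n) ℂ) - σ i)
        = 1 - ρ i := by
      rw [smul_sub, smul_smul, inv_mul_cancel₀ (hμ i).1.ne', one_smul, hρdef]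
    rwa [he] at h
  have hIInf_ : ((1:Matrix (Fin n) (Fin n) ℂ) - rhoInf).PosSemidef :=
    QPEAux.posSemidef_of_tendsto (tendsto_const_nhds.sub hTρ)
      (Filter.Eventually.of_forall hIρ)
  -- eigenspaces
  set E : ℕ → Submodule ℂ (Fin n → ℂ) :=
    fun i => LinearMap.ker (Matrix.mulVecLin (1 - ρ i)) with hEdef
  have memE : ∀ i v, v ∈ E i ↔ ρ i *ᵥ v = v := by
    intro i v
    rw [hEdef]
    simp only [LinearMap.mem_ker, Matrix.mulVecLin_apply]
    rw [Matrix.sub_mulVec, Matrix.one_mulVec, sub_eq_zero]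
    exact ⟨fun h => h.symm, fun h => h.symm⟩
  have hEanti : ∀ i, E (i+1) ≤ E i := by
    intro i v hv
    rw [memE] at hv ⊢
    have ha := (hIρ i).dotProduct_mulVec_nonneg v
    have hb := (hstep i).dotProduct_mulVec_nonneg v
    have hsum : star v ⬝ᵥ ((1 - ρ i) *ᵥ v) + star v ⬝ᵥ ((ρ i - ρ (i+1)) *ᵥ v) = 0 := by
      rw [← dotProduct_add, ← Matrix.add_mulVec, sub_add_sub_cancel,
        Matrix.sub_mulVec, Matrix.one_mulVec, hv, sub_self, dotProduct_zero]
    have ha0 : star v ⬝ᵥ ((1 - ρ i) *ᵥ v) = 0 := by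
      have h1 : star v ⬝ᵥ ((1 - ρ i) *ᵥ v) = - (star v ⬝ᵥ ((ρ i - ρ (i+1)) *ᵥ v)) :=
        eq_neg_of_add_eq_zero_left hsum
      refine le_antisymm ?_ ha
      rw [h1]
      exact neg_nonpos.mpr hb
    have h2 := ((hIρ i).dotProduct_mulVec_zero_iff v).mp ha0
    rw [Matrix.sub_mulVec, Matrix.one_mulVec, sub_eq_zero] at h2
    exact h2.symm
  have hEmono : Antitone E := antitone_nat_of_succ_le hEanti
  obtain ⟨N, hNmin⟩ : ∃ N, ∀ i, Module.finrank ℂ (E N) ≤ Module.finrank ℂ (E i) := by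
    obtain ⟨N, hN⟩ := Nat.sInf_mem
      (s := Set.range fun i => Module.finrank ℂ (E i)) ⟨_, 0, rfl⟩
    exact ⟨N, fun i => hN.le.trans (Nat.sInf_le ⟨i, rfl⟩)⟩
  have hEeq : ∀ i, N ≤ i → E i = E N := fun i hi =>
    Submodule.eq_of_le_of_finrank_le (hEmono hi) (hNmin i)
  -- the common fixed vector
  obtain ⟨-, -, -, ⟨v₀, hv₀ne, hv₀eig⟩, -⟩ := QPEAux.maxEig_herm (hpos N).1 hn
  have hv₀N : ρ N *ᵥ v₀ = v₀ := by
    rw [hρdef]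
    rw [Matrix.smul_mulVec, hv₀eig, QPEAux.real_smul_vec, smul_smul]
    rw [← Complex.ofReal_mul, inv_mul_cancel₀ (hμ N).1.ne']
    simp
  have hfix : ∀ i, ρ i *ᵥ v₀ = v₀ := by
    intro i
    rcases le_total i N with h | h
    · exact (memE i v₀).mp (hEmono h ((memE N v₀).mpr hv₀N))
    · exact (memE i v₀).mp ((hEeq i h).symm ▸ (memE N v₀).mpr hv₀N)
  have hrhoInffix : rhoInf *ᵥ v₀ = v₀ := by
    have h1 : Filter.Tendsto (fun i => ρ i *ᵥ v₀) Filter.atTop (nhds (rhoInf *ᵥ v₀)) :=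
      ((continuous_id.matrix_mulVec continuous_const).tendsto rhoInf).comp hTρ
    have h2 : (fun i => ρ i *ᵥ v₀) = fun _ => v₀ := funext hfix
    rw [h2] at h1
    exact tendsto_nhds_unique h1 tendsto_const_nhds
  have hmaxrhoInf : maxEig rhoInf = 1 := by
    refine QPEAux.maxEig_eq rhoInf 1 ⟨v₀, hv₀ne, ?_⟩ ?_
    · rw [hrhoInffix]
      simp
    · simpa [one_smul] using hIInf_
  have htrrhoInf : rhoInf.trace = ((tInf : ℝ) : ℂ) := by
    have h1 : Filter.Tendsto (fun i => (ρ i).trace) Filter.atTop (nhds rhoInf.trace) :=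
      ((continuous_id.matrix_trace).tendsto rhoInf).comp hTρ
    have h2 : Filter.Tendsto (fun i => (ρ i).trace) Filter.atTop (nhds ((tInf:ℝ):ℂ)) := by
      have h3 : Filter.Tendsto (fun i => ((t i : ℝ):ℂ)) Filter.atTop (nhds ((tInf:ℝ):ℂ)) :=
        (Complex.continuous_ofReal.tendsto tInf).comp ht_tend
      exact h3.congr fun i => (htρ i).symm
    exact tendsto_nhds_unique h1 h2
  refine ⟨(tInf)⁻¹ • rhoInf, ⟨QPEAux.posSemidef_smul hrhoInfPSD (inv_nonneg.mpr htInfpos.le), ?_⟩,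
    ?_, ?_, ?_⟩
  · rw [Matrix.trace_smul, htrrhoInf, Complex.real_smul, ← Complex.ofReal_mul,
      inv_mul_cancel₀ htInfpos.ne']
    simp
  · -- convergence of σ
    have h1 : Filter.Tendsto (fun i => (t i)⁻¹) Filter.atTop (nhds (tInf)⁻¹) :=
      ht_tend.inv₀ htInfpos.ne'
    have h2 : Filter.Tendsto (fun i => (t i)⁻¹ • ρ i) Filter.atTop (nhds ((tInf)⁻¹ • rhoInf)) :=
      h1.smul hTρ
    refine h2.congr fun i => ?_
    rw [htdef]
    show ((μ i)⁻¹)⁻¹ • ρ i = σ i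
    rw [inv_inv, hσρ]
  · -- QPE (σ i) σ'
    intro i
    have hms : maxEig ((tInf)⁻¹ • rhoInf) = (tInf)⁻¹ := by
      refine QPEAux.maxEig_eq _ _ ⟨v₀, hv₀ne, ?_⟩ ?_
      · rw [Matrix.smul_mulVec, hrhoInffix, QPEAux.real_smul_vec]
      · have h := QPEAux.posSemidef_smul hIInf_ (inv_nonneg.mpr htInfpos.le)
        rwa [smul_sub] at h
    show (maxEig ((tInf)⁻¹ • rhoInf) • σ i - maxEig (σ i) • ((tInf)⁻¹ • rhoInf)).PosSemidef
    rw [hms]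
    have he : (tInf)⁻¹ • σ i - μ i • ((tInf)⁻¹ • rhoInf) = ((tInf)⁻¹ * μ i) • (ρ i - rhoInf) := by
      rw [← hσρ i, smul_sub, smul_smul, smul_smul, smul_smul]
      ring_nf
    rw [show maxEig (σ i) = μ i from rfl, he]
    exact QPEAux.posSemidef_smul (hrhoInfle i)
      (mul_nonneg (inv_nonneg.mpr htInfpos.le) (hμ i).1.le)
  · -- supremum property
    intro τ hτ hQ
    set ν : ℝ := maxEig τ with hνdef
    have hν := QPEAux.density_maxEig_pos_le_one hτ.1 hτ.2 hn
    have hQ' : ∀ i, (ν • σ i - μ i • τ).PosSemidef := fun i => hQ i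
    have hscaled : ∀ i, (ρ i - ν⁻¹ • τ).PosSemidef := by
      intro i
      have hcpos : (0:ℝ) ≤ (ν * μ i)⁻¹ :=
        inv_nonneg.mpr (mul_nonneg hν.1.le (hμ i).1.le)
      have h := QPEAux.posSemidef_smul (hQ' i) hcpos
      have hc1 : (ν * μ i)⁻¹ * ν = (μ i)⁻¹ :=
        QPEAux.inv_mul_aux2 hν.1.ne'
      have hc2 : (ν * μ i)⁻¹ * μ i = ν⁻¹ :=
        QPEAux.inv_mul_aux1 (hμ i).1.ne'
      have he : (ν * μ i)⁻¹ • (ν • σ i - μ i • τ) = ρ i - ν⁻¹ • τ := by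
        rw [smul_sub, smul_smul, smul_smul, hc1, hc2, hρdef]
      rwa [he] at h
    have hlim : (rhoInf - ν⁻¹ • τ).PosSemidef := by
      refine QPEAux.posSemidef_of_tendsto (hTρ.sub_const _) ?_
      exact Filter.Eventually.of_forall hscaled
    have hms : maxEig ((tInf)⁻¹ • rhoInf) = (tInf)⁻¹ := by
      refine QPEAux.maxEig_eq _ _ ⟨v₀, hv₀ne, ?_⟩ ?_
      · rw [Matrix.smul_mulVec, hrhoInffix, QPEAux.real_smul_vec]
      · have h := QPEAux.posSemidef_smul hIInf_ (inv_nonneg.mpr htInfpos.le)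
        rwa [smul_sub] at h
    show (maxEig τ • ((tInf)⁻¹ • rhoInf) - maxEig ((tInf)⁻¹ • rhoInf) • τ).PosSemidef
    rw [hms, ← hνdef]
    have hc : (tInf)⁻¹ * ν * ν⁻¹ = (tInf)⁻¹ := by
      rw [mul_assoc, mul_inv_cancel₀ hν.1.ne', mul_one]
    have he : ν • ((tInf)⁻¹ • rhoInf) - (tInf)⁻¹ • τ = ((tInf)⁻¹ * ν) • (rhoInf - ν⁻¹ • τ) := by
      calc ν • ((tInf)⁻¹ • rhoInf) - (tInf)⁻¹ • τ
          = (ν * (tInf)⁻¹) • rhoInf - (tInf)⁻¹ • τ := by rw [smul_smul]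
        _ = ((tInf)⁻¹ * ν) • rhoInf - (((tInf)⁻¹ * ν) * ν⁻¹) • τ := by
            rw [mul_comm ν ((tInf)⁻¹), hc]
        _ = ((tInf)⁻¹ * ν) • (rhoInf - ν⁻¹ • τ) := by rw [smul_sub, smul_smul]
    rw [he]
    exact QPEAux.posSemidef_smul hlim
      (mul_nonneg (inv_nonneg.mpr htInfpos.le) hν.1.le)
end
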